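/- arXiv:2107.05913 — 2 statements merged into one kernel-verified Lean document; each statement's English description precedes it below -/
import Mathlib

section
/- Let Y, Ŷ, h(X) be {-1,+1}-valued random variables such that Ŷ is conditionally independent of X (and hence of h(X)) given Y, with symmetric noise rate P(Ŷ ≠ Y | Y = y) = e for both y, where e < 1/2. Then P(h(X) ≠ Ŷ) = (1 − 2e)·P(h(X) ≠ Y) + e. Consequently, minimizing P(h(X) ≠ Ŷ) over classifiers h is equivalent to minimizing P(h(X) ≠ Y). -/
/-!
Condition on `Y = y`. Within that event, `h(X) ≠ Ŷ` happens exactly when either the label is kept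
and `h(X) = -y`, or the label is flipped and `h(X) = y`. Conditional independence factors these as
`(1 - e)·P(h = -y, Y = y)` and `e·P(h = y, Y = y)`, which add up to
`(1 - 2e)·P(h ≠ Y, Y = y) + e·P(Y = y)`; summing over `y = ±1` gives the claim.
-/

open MeasureTheory

theorem setOf_ne_inter_eq {Ω : Type*} {Z W : Ω → ℤ} (hZ : ∀ ω, Z ω = 1 ∨ Z ω = -1) {y : ℤ}
    (hy : y = 1 ∨ y = -1) :
    {ω | Z ω ≠ W ω} ∩ {ω | W ω = y} = {ω | Z ω = -y} ∩ {ω | W ω = y} := by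
  ext ω
  simp only [Set.mem_inter_iff, Set.mem_ofPred_eq]
  have := hZ ω
  omega

section

variable {Ω : Type*} [MeasurableSpace Ω] {μ : Measure Ω} [IsFiniteMeasure μ]

theorem measureReal_inter_inter_eq_mul_of_mul_eq {S T B : Set Ω} {q : ℝ}
    (hind : μ.real (S ∩ T ∩ B) * μ.real B = μ.real (S ∩ B) * μ.real (T ∩ B))
    (hS : μ.real (S ∩ B) = q * μ.real B) :
    μ.real (S ∩ T ∩ B) = q * μ.real (T ∩ B) := by
  by_cases hB : μ.real B = 0
  · have hnull : ∀ C : Set Ω, μ.real (C ∩ B) = 0 := fun C =>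
      le_antisymm (hB ▸ measureReal_mono Set.inter_subset_right) measureReal_nonneg
    rw [hnull, hnull, mul_zero]
  · exact mul_right_cancel₀ hB (by rw [hind, hS]; ring)

theorem measureReal_eq_add_of_eq_one_or_eq_neg_one {Z : Ω → ℤ} (hZm : Measurable Z)
    (hZ : ∀ ω, Z ω = 1 ∨ Z ω = -1) {z : ℤ} (hz : z = 1 ∨ z = -1) (E : Set Ω) :
    μ.real E = μ.real ({ω | Z ω = z} ∩ E) + μ.real ({ω | Z ω = -z} ∩ E) := by
  have hcompl : {ω | Z ω = -z} ∩ E = E \ {ω | Z ω = z} := by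
    ext ω
    simp only [Set.mem_inter_iff, Set.mem_sdiff, Set.mem_ofPred_eq]
    rw [and_comm]
    exact and_congr_right fun _ => by have := hZ ω; omega
  rw [hcompl, Set.inter_comm]
  exact (measureReal_inter_add_sdiff (hZm (measurableSet_singleton z))).symm

theorem measureReal_ne_inter_eq_of_symmetric_noise {Yh hX : Ω → ℤ} (hYhm : Measurable Yh)
    (hhXm : Measurable hX) (hYhr : ∀ ω, Yh ω = 1 ∨ Yh ω = -1)
    (hhXr : ∀ ω, hX ω = 1 ∨ hX ω = -1) {y : ℤ} (hy : y = 1 ∨ y = -1) {B : Set Ω} {e : ℝ}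
    (hnoise : μ.real ({ω | Yh ω = -y} ∩ B) = e * μ.real B)
    (hind : ∀ a b : ℤ, μ.real ({ω | Yh ω = a} ∩ {ω | hX ω = b} ∩ B) * μ.real B
      = μ.real ({ω | Yh ω = a} ∩ B) * μ.real ({ω | hX ω = b} ∩ B)) :
    μ.real ({ω | hX ω ≠ Yh ω} ∩ B)
      = (1 - 2 * e) * μ.real ({ω | hX ω = -y} ∩ B) + e * μ.real B := by
  have hkeep : μ.real ({ω | Yh ω = y} ∩ B) = (1 - e) * μ.real B := by
    linarith [measureReal_eq_add_of_eq_one_or_eq_neg_one (μ := μ) hYhm hYhr hy B]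
  have hflip_agree := measureReal_inter_inter_eq_mul_of_mul_eq (hind (-y) y) hnoise
  have hkeep_err := measureReal_inter_inter_eq_mul_of_mul_eq (hind y (-y)) hkeep
  have hdisagree : μ.real ({ω | hX ω ≠ Yh ω} ∩ B)
      = μ.real ({ω | Yh ω = y} ∩ {ω | hX ω = -y} ∩ B)
        + μ.real ({ω | Yh ω = -y} ∩ {ω | hX ω = y} ∩ B) := by
    rw [measureReal_eq_add_of_eq_one_or_eq_neg_one hYhm hYhr hy, ← Set.inter_assoc,
      ← Set.inter_assoc]
    congr 3 <;> ext ω <;> simp only [Set.mem_inter_iff, Set.mem_ofPred_eq] <;>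
      have := hhXr ω <;> omega
  rw [hdisagree, hflip_agree, hkeep_err]
  linear_combination (-e) * measureReal_eq_add_of_eq_one_or_eq_neg_one (μ := μ) hhXm hhXr hy B

end

theorem stmt0_general {Ω : Type*} [MeasurableSpace Ω] (μ : Measure Ω) [IsProbabilityMeasure μ]
    (Y Yh hX : Ω → ℤ) (e : ℝ)
    (hYm : Measurable Y) (hYhm : Measurable Yh) (hhXm : Measurable hX)
    (hYr : ∀ ω, Y ω = 1 ∨ Y ω = -1)
    (hYhr : ∀ ω, Yh ω = 1 ∨ Yh ω = -1)
    (hhXr : ∀ ω, hX ω = 1 ∨ hX ω = -1)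
    (hnoise : ∀ y : ℤ, y = 1 ∨ y = -1 →
      (μ ({ω | Yh ω ≠ Y ω} ∩ {ω | Y ω = y})).toReal = e * (μ {ω | Y ω = y}).toReal)
    (hcondind : ∀ (s t : Set ℤ) (y : ℤ),
      (μ ({ω | Yh ω ∈ s} ∩ {ω | hX ω ∈ t} ∩ {ω | Y ω = y})).toReal
          * (μ {ω | Y ω = y}).toReal
        = (μ ({ω | Yh ω ∈ s} ∩ {ω | Y ω = y})).toReal
          * (μ ({ω | hX ω ∈ t} ∩ {ω | Y ω = y})).toReal) :
    (μ {ω | hX ω ≠ Yh ω}).toReal = (1 - 2*e) * (μ {ω | hX ω ≠ Y ω}).toReal + e := by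
  have hslice : ∀ y : ℤ, y = 1 ∨ y = -1 → μ.real ({ω | hX ω ≠ Yh ω} ∩ {ω | Y ω = y})
      = (1 - 2 * e) * μ.real ({ω | hX ω ≠ Y ω} ∩ {ω | Y ω = y}) + e * μ.real {ω | Y ω = y} := by
    intro y hy
    rw [setOf_ne_inter_eq hhXr hy]
    refine measureReal_ne_inter_eq_of_symmetric_noise hYhm hhXm hYhr hhXr hy ?_ fun a b => ?_
    · rw [← setOf_ne_inter_eq hYhr hy]
      exact hnoise y hy
    · have := hcondind {a} {b} y
      simp only [Set.mem_singleton_iff] at this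
      exact this
  have hsplit := measureReal_eq_add_of_eq_one_or_eq_neg_one (μ := μ) hYm hYr (Or.inl rfl)
  have htotal : μ.real {ω | Y ω = 1} + μ.real {ω | Y ω = -1} = 1 := by
    simpa using (hsplit Set.univ).symm
  change μ.real _ = (1 - 2 * e) * μ.real _ + e
  rw [hsplit, hsplit {ω | hX ω ≠ Y ω}]
  simp only [Set.inter_comm {ω | Y ω = _}]
  rw [hslice 1 (Or.inl rfl), hslice (-1) (Or.inr rfl)]
  linear_combination e * htotal

/-- Lemma 2: with symmetric instance-independent noise rate `e < 1/2` and `Ŷ`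
conditionally independent of `h(X)` given `Y`,
`P(h(X) ≠ Ŷ) = (1 − 2e)·P(h(X) ≠ Y) + e`. -/
theorem stmt0 {Ω : Type*} [MeasurableSpace Ω] (μ : Measure Ω) [IsProbabilityMeasure μ]
    (Y Yh hX : Ω → ℤ) (e : ℝ)
    (hYm : Measurable Y) (hYhm : Measurable Yh) (hhXm : Measurable hX)
    (hYr : ∀ ω, Y ω = 1 ∨ Y ω = -1)
    (hYhr : ∀ ω, Yh ω = 1 ∨ Yh ω = -1)
    (hhXr : ∀ ω, hX ω = 1 ∨ hX ω = -1)
    (he : e < 1/2)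
    (hnoise : ∀ y : ℤ, y = 1 ∨ y = -1 →
      (μ ({ω | Yh ω ≠ Y ω} ∩ {ω | Y ω = y})).toReal = e * (μ {ω | Y ω = y}).toReal)
    (hcondind : ∀ (s t : Set ℤ) (y : ℤ),
      (μ ({ω | Yh ω ∈ s} ∩ {ω | hX ω ∈ t} ∩ {ω | Y ω = y})).toReal
          * (μ {ω | Y ω = y}).toReal
        = (μ ({ω | Yh ω ∈ s} ∩ {ω | Y ω = y})).toReal
          * (μ ({ω | hX ω ∈ t} ∩ {ω | Y ω = y})).toReal) :
    (μ {ω | hX ω ≠ Yh ω}).toReal = (1 - 2*e) * (μ {ω | hX ω ≠ Y ω}).toReal + e :=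
  stmt0_general μ Y Yh hX e hYm hYhm hhXm hYr hYhr hhXr hnoise hcondind
end

section
/- Let ℓ be a loss with values in [0, ∞) and let Ỹ be a noisy version of y ∈ {-1,+1} with P(Ỹ=-y|Y=y)=e_{sgn(y)}, where e₊+e₋ < 1. Define ℓ⋄(t, ỹ) = (1 − e_{−sgn(ỹ)})·ℓ(t, ỹ) − e_{sgn(ỹ)}·ℓ(t, −ỹ). Then for every prediction value t and true label y: (1/(1 − e₊ − e₋))·E_{Ỹ|Y=y}[ℓ⋄(t, Ỹ)] = ℓ(t, y). -/
/-!
Conditioned on the true label, the noisy label keeps it with probability `1 - e` and flips it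
with probability `e`. In the expectation of the corrected loss the two `ℓ(t, -y)` terms cancel,
and the `ℓ(t, y)` terms add up to `(1 - e₊ - e₋) ℓ(t, y)`, whichever label `y` is.
-/

theorem mix_correctedLoss_eq {R : Type*} [CommRing R] (e e' u v : R) :
    (1 - e) * ((1 - e') * u - e * v) + e * ((1 - e) * v - e' * u) = (1 - e - e') * u := by
  ring

theorem stmt12_general {α : Type*} (ℓ : α → ℤ → ℝ) (eP eM : ℝ) (t : α) (y : ℤ)
    (hsum : eP + eM < 1) :
    (1 / (1 - eP - eM)) *
      ((1 - (if y = 1 then eP else eM)) *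
          ((1 - (if y = 1 then eM else eP)) * ℓ t y
            - (if y = 1 then eP else eM) * ℓ t (-y))
        + (if y = 1 then eP else eM) *
          ((1 - (if y = 1 then eP else eM)) * ℓ t (-y)
            - (if y = 1 then eM else eP) * ℓ t y))
    = ℓ t y := by
  have hne : 1 - eP - eM ≠ 0 := by linarith
  split_ifs <;> rw [mix_correctedLoss_eq]
  · rw [← mul_assoc, one_div_mul_cancel hne, one_mul]
  · rw [sub_right_comm 1 eM eP, ← mul_assoc, one_div_mul_cancel hne, one_mul]

/-- Unbiasedness of the noise-corrected loss (Natarajan et al.):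
`(1/(1 − e₊ − e₋))·E_{Ỹ|Y=y}[ℓ⋄(t, Ỹ)] = ℓ(t, y)`. -/
theorem stmt12 {α : Type*} (ℓ : α → ℤ → ℝ) (eP eM : ℝ) (t : α) (y : ℤ)
    (hy : y = 1 ∨ y = -1)
    (hnn : ∀ (t : α) (y : ℤ), 0 ≤ ℓ t y)
    (hsum : eP + eM < 1) :
    (1 / (1 - eP - eM)) *
      ((1 - (if y = 1 then eP else eM)) *
          ((1 - (if y = 1 then eM else eP)) * ℓ t y
            - (if y = 1 then eP else eM) * ℓ t (-y))
        + (if y = 1 then eP else eM) *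
          ((1 - (if y = 1 then eP else eM)) * ℓ t (-y)
            - (if y = 1 then eM else eP) * ℓ t y))
    = ℓ t y :=
  stmt12_general ℓ eP eM t y hsum
end
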